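/- Let υ = (υ₁, υ₂, υ₃) : I → ℝ³ be a smooth unit-speed Legendre curve in 𝒬³_α and ϕ : I → ℝ a smooth function with υ₁' = cos ϕ/υ₁, υ₂' = sin ϕ/υ₁, υ₃' = 2 sin ϕ. Then ∇_{υ'}υ'(s) = (ϕ'(s) + sin ϕ(s)/υ₁(s)²)·φ_{υ(s)}(υ'(s)), where φ_{υ(s)}(υ'(s)) = (−sin ϕ(s)/υ₁(s), cos ϕ(s)/υ₁(s), 2 cos ϕ(s)); since g(φυ', φυ') = 1, the geodesic curvature of υ is κ = |ϕ' + sin ϕ/υ₁²|. -/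

import Mathlib

noncomputable section

/-- Points and tangent vectors of ℝ³, written as triples `(x, y, z)`. -/
abbrev R3 : Type := ℝ × ℝ × ℝ

/-- The underlying open set `{(x,y,z) : x > 0}` of `𝒬³_α`. -/
def U3 : Set R3 := {p : R3 | 0 < p.1}

/-- The contact form `η` on `𝒬³_α` : `η_p(v) = −2x·v₂ + v₃`. -/
def etaQ (p v : R3) : ℝ := -2 * p.1 * v.2.1 + v.2.2

/-- The Reeb vector field `ξ = (0,0,1)`. -/
def xiQ : R3 := (0, 0, 1)

/-- The `(1,1)`-tensor field `φ` : `φ_p(v) = (−v₂, v₁, 2x·v₁)`. -/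
def phiQ (p v : R3) : R3 := (-v.2.1, v.1, 2 * p.1 * v.1)

/-- The pseudo-metric `g_p(u,v) = x²(u₁v₁ + u₂v₂) + ε·η_p(u)·η_p(v)` on `𝒬³_α`. -/
def gQ (ε : ℝ) (p u v : R3) : ℝ :=
  p.1 ^ 2 * (u.1 * v.1 + u.2.1 * v.2.1) + ε * etaQ p u * etaQ p v

/-- The covariant derivative `∇_{υ'}υ' = υ'' + Γ_{υ}(υ', υ')` of the velocity along `υ`. -/
def covQ (Γ : R3 → R3 →ₗ[ℝ] R3 →ₗ[ℝ] R3) (υ : ℝ → R3) (s : ℝ) : R3 :=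
  deriv (deriv υ) s + Γ (υ s) (deriv υ s) (deriv υ s)

/-- Explicit Christoffel symbols. -/
def GammaC (ε : ℝ) (p u v : R3) : R3 :=
  ( (u.1*v.1)/p.1 - (1+4*ε)*(u.2.1*v.2.1)/p.1 + ε*(u.2.1*v.2.2 + u.2.2*v.2.1)/p.1^2,
    (1+2*ε)*(u.1*v.2.1 + u.2.1*v.1)/p.1 - ε*(u.1*v.2.2 + u.2.2*v.1)/p.1^2,
    (1+4*ε)*(u.1*v.2.1 + u.2.1*v.1) - 2*ε*(u.1*v.2.2 + u.2.2*v.1)/p.1 )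

/-- Directional derivative of the metric. -/
def DgQ (ε : ℝ) (p u v w : R3) : ℝ :=
  (2*((v.1*w.1+v.2.1*w.2.1)+4*ε*(v.2.1*w.2.1))*p.1
    + ε*(-2*v.2.1*w.2.2-2*v.2.2*w.2.1)) * u.1

lemma fderiv_gQ (ε : ℝ) (v w : R3) (p : R3) (u : R3) :
    fderiv ℝ (fun q : R3 => gQ ε q v w) p u = DgQ ε p u v w := by
  set A : ℝ := (v.1*w.1+v.2.1*w.2.1)+4*ε*(v.2.1*w.2.1) with hA
  set B : ℝ := ε*(-2*v.2.1*w.2.2-2*v.2.2*w.2.1) with hB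
  set C : ℝ := ε*v.2.2*w.2.2 with hC
  have hfun : (fun q : R3 => gQ ε q v w) = fun q : R3 => A*q.1^2 + B*q.1 + C := by
    funext q; simp only [gQ, etaQ, hA, hB, hC]; ring
  have hd : HasDerivAt (fun t : ℝ => A*t^2 + B*t + C) (2*A*p.1 + B) p.1 := by
    have h := (((hasDerivAt_pow 2 p.1).const_mul A).add
      ((hasDerivAt_id p.1).const_mul B)).add_const C
    rw [show 2*A*p.1 + B = A * ((2:ℕ) * p.1 ^ (2 - 1)) + B * 1 by push_cast; ring]; exact h
  have hF : HasFDerivAt (fun q : R3 => gQ ε q v w)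
      ((2*A*p.1+B) • ContinuousLinearMap.fst ℝ ℝ (ℝ×ℝ)) p := by
    rw [hfun]; exact hd.comp_hasFDerivAt p hasFDerivAt_fst
  rw [hF.fderiv]
  simp only [ContinuousLinearMap.smul_apply, ContinuousLinearMap.coe_fst', smul_eq_mul,
    DgQ, hA, hB]

lemma koszul (ε : ℝ) (Γ : R3 → R3 →ₗ[ℝ] R3 →ₗ[ℝ] R3)
    (hΓsymm : ∀ p ∈ U3, ∀ u v : R3, Γ p u v = Γ p v u)
    (hΓmetric : ∀ X Y Z : R3 → R3,
      ContDiffOn ℝ (⊤ : ℕ∞) X U3 → ContDiffOn ℝ (⊤ : ℕ∞) Y U3 → ContDiffOn ℝ (⊤ : ℕ∞) Z U3 →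
      ∀ p ∈ U3, fderiv ℝ (fun q => gQ ε q (Y q) (Z q)) p (X p) =
        gQ ε p (fderiv ℝ Y p (X p) + Γ p (X p) (Y p)) (Z p) +
        gQ ε p (Y p) (fderiv ℝ Z p (X p) + Γ p (X p) (Z p)))
    (p : R3) (hp : p ∈ U3) (u v w : R3) :
    2 * gQ ε p (Γ p u v) w = DgQ ε p u v w + DgQ ε p v u w - DgQ ε p w u v := by
  have hmet : ∀ a b c : R3, DgQ ε p a b c
      = gQ ε p (Γ p a b) c + gQ ε p b (Γ p a c) := by
    intro a b c
    have h := hΓmetric (fun _ => a) (fun _ => b) (fun _ => c)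
      contDiffOn_const contDiffOn_const contDiffOn_const p hp
    rw [fderiv_gQ] at h
    simpa using h
  have hg : ∀ a b : R3, gQ ε p a b = gQ ε p b a := by
    intro a b; simp only [gQ, etaQ]; ring
  have hA := hmet u v w
  have hB := hmet v u w
  have hC := hmet w u v
  rw [hΓsymm p hp v u] at hB
  rw [hΓsymm p hp w u, hΓsymm p hp w v] at hC
  have h1 := hg v (Γ p u w)
  linarith

lemma gamma_eq (ε : ℝ) (hε : ε = 1 ∨ ε = -1) (Γ : R3 → R3 →ₗ[ℝ] R3 →ₗ[ℝ] R3)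
    (hΓsymm : ∀ p ∈ U3, ∀ u v : R3, Γ p u v = Γ p v u)
    (hΓmetric : ∀ X Y Z : R3 → R3,
      ContDiffOn ℝ (⊤ : ℕ∞) X U3 → ContDiffOn ℝ (⊤ : ℕ∞) Y U3 → ContDiffOn ℝ (⊤ : ℕ∞) Z U3 →
      ∀ p ∈ U3, fderiv ℝ (fun q => gQ ε q (Y q) (Z q)) p (X p) =
        gQ ε p (fderiv ℝ Y p (X p) + Γ p (X p) (Y p)) (Z p) +
        gQ ε p (Y p) (fderiv ℝ Z p (X p) + Γ p (X p) (Z p)))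
    (p : R3) (hp : p ∈ U3) (u v : R3) :
    Γ p u v = GammaC ε p u v := by
  have hx : (0:ℝ) < p.1 := hp
  have hxne : p.1 ≠ 0 := ne_of_gt hx
  have K : ∀ w : R3, gQ ε p (Γ p u v) w = gQ ε p (GammaC ε p u v) w := by
    intro w
    have h := koszul ε Γ hΓsymm hΓmetric p hp u v w
    have h2 : 2 * gQ ε p (GammaC ε p u v) w
        = DgQ ε p u v w + DgQ ε p v u w - DgQ ε p w u v := by
      rcases hε with rfl | rfl <;>
        · simp only [gQ, etaQ, DgQ, GammaC]; field_simp; ring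
    linarith
  set d : R3 := Γ p u v with hd
  set e : R3 := GammaC ε p u v with he
  have K1 := K (1,0,0)
  have K2 := K (0,1,0)
  have K3 := K (0,0,1)
  simp only [gQ, etaQ] at K1 K2 K3
  norm_num at K1 K2 K3
  have hεne : ε ≠ 0 := by rcases hε with rfl | rfl <;> norm_num
  have h1 : d.1 = e.1 := K1.resolve_right hxne
  have heta : -(2*p.1*d.2.1) + d.2.2 = -(2*p.1*e.2.1) + e.2.2 := K3.resolve_right hεne
  have h2 : d.2.1 = e.2.1 := by
    have hp2 : p.1^2 ≠ 0 := pow_ne_zero 2 hxne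
    have hterm : ε*(-(2*p.1*d.2.1)+d.2.2)*(2*p.1) = ε*(-(2*p.1*e.2.1)+e.2.2)*(2*p.1) := by
      rw [heta]
    have : p.1^2 * d.2.1 = p.1^2 * e.2.1 := by linarith
    exact mul_left_cancel₀ hp2 this
  have h3 : d.2.2 = e.2.2 := by rw [h2] at heta; linarith
  exact Prod.ext_iff.mpr ⟨h1, Prod.ext_iff.mpr ⟨h2, h3⟩⟩

set_option maxHeartbeats 2000000 in
/-- for a unit-speed Legendre curve `υ` in `𝒬³_α` with angle function `ϕ`,
`∇_{υ'}υ' = (ϕ' + sin ϕ/υ₁²)·φ(υ')`, where `φ(υ') = (−sin ϕ/υ₁, cos ϕ/υ₁, 2 cos ϕ)`;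
since `g(φυ', φυ') = 1`, the geodesic curvature of `υ` is `κ = |ϕ' + sin ϕ/υ₁²|`. -/
theorem legendre_curvature_Q (ε : ℝ) (hε : ε = 1 ∨ ε = -1)
    (Γ : R3 → R3 →ₗ[ℝ] R3 →ₗ[ℝ] R3)
    (hΓsmooth : ∀ u v : R3, ContDiffOn ℝ (⊤ : ℕ∞) (fun p => Γ p u v) U3)
    (hΓsymm : ∀ p ∈ U3, ∀ u v : R3, Γ p u v = Γ p v u)
    (hΓmetric : ∀ X Y Z : R3 → R3,
      ContDiffOn ℝ (⊤ : ℕ∞) X U3 → ContDiffOn ℝ (⊤ : ℕ∞) Y U3 → ContDiffOn ℝ (⊤ : ℕ∞) Z U3 →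
      ∀ p ∈ U3, fderiv ℝ (fun q => gQ ε q (Y q) (Z q)) p (X p) =
        gQ ε p (fderiv ℝ Y p (X p) + Γ p (X p) (Y p)) (Z p) +
        gQ ε p (Y p) (fderiv ℝ Z p (X p) + Γ p (X p) (Z p)))
    (I : Set ℝ) (hIopen : IsOpen I) (hIconn : I.OrdConnected)
    (υ : ℝ → R3) (hυ : ContDiff ℝ (⊤ : ℕ∞) υ)
    (hpos : ∀ s ∈ I, 0 < (υ s).1)
    (hLeg : ∀ s ∈ I, etaQ (υ s) (deriv υ s) = 0)
    (hUnit : ∀ s ∈ I, gQ ε (υ s) (deriv υ s) (deriv υ s) = 1)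
    (ϕ : ℝ → ℝ) (hϕ : ContDiffOn ℝ (⊤ : ℕ∞) ϕ I)
    (h1 : ∀ s ∈ I, (deriv υ s).1 = Real.cos (ϕ s) / (υ s).1)
    (h2 : ∀ s ∈ I, (deriv υ s).2.1 = Real.sin (ϕ s) / (υ s).1)
    (h3 : ∀ s ∈ I, (deriv υ s).2.2 = 2 * Real.sin (ϕ s)) :
    ∀ s ∈ I,
      covQ Γ υ s = (deriv ϕ s + Real.sin (ϕ s) / (υ s).1 ^ 2) • phiQ (υ s) (deriv υ s) ∧
      phiQ (υ s) (deriv υ s) =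
        (-Real.sin (ϕ s) / (υ s).1, Real.cos (ϕ s) / (υ s).1, 2 * Real.cos (ϕ s)) ∧
      gQ ε (υ s) (phiQ (υ s) (deriv υ s)) (phiQ (υ s) (deriv υ s)) = 1 ∧
      Real.sqrt |gQ ε (υ s) (covQ Γ υ s) (covQ Γ υ s)| =
        |deriv ϕ s + Real.sin (ϕ s) / (υ s).1 ^ 2| := by
  intro s hs
  have hx : (0:ℝ) < (υ s).1 := hpos s hs
  have hxne : (υ s).1 ≠ 0 := ne_of_gt hx
  set x : ℝ := (υ s).1 with hxdef
  set cφ : ℝ := Real.cos (ϕ s) with hcdef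
  set sφ : ℝ := Real.sin (ϕ s) with hsdef
  set dφ : ℝ := deriv ϕ s with hdφdef
  -- first derivative as a triple
  have hdu : deriv υ s = (cφ/x, sφ/x, 2*sφ) :=
    Prod.ext_iff.mpr ⟨h1 s hs, Prod.ext_iff.mpr ⟨h2 s hs, h3 s hs⟩⟩
  -- the value of phi on the velocity
  have hphi : phiQ (υ s) (deriv υ s) = (-sφ/x, cφ/x, 2*cφ) := by
    rw [phiQ, hdu]
    refine Prod.ext_iff.mpr ⟨by ring, Prod.ext_iff.mpr ⟨rfl, ?_⟩⟩
    show 2 * x * (cφ/x) = 2*cφ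
    field_simp
  -- second derivative
  have hϕd : HasDerivAt ϕ dφ s :=
    ((hϕ.contDiffAt (hIopen.mem_nhds hs)).differentiableAt (by simp)).hasDerivAt
  have hx1 : HasDerivAt (fun t => (υ t).1) (cφ/x) s := by
    have h := (ContinuousLinearMap.fst ℝ ℝ (ℝ×ℝ)).hasFDerivAt.comp_hasDerivAt s
      (hυ.differentiable (by simp) s).hasDerivAt
    simpa [h1 s hs, Function.comp_def] using h
  have hc1 : HasDerivAt (fun t => Real.cos (ϕ t) / (υ t).1)
      (((-sφ*dφ)*x - cφ*(cφ/x))/x^2) s := hϕd.cos.div hx1 hxne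
  have hc2 : HasDerivAt (fun t => Real.sin (ϕ t) / (υ t).1)
      (((cφ*dφ)*x - sφ*(cφ/x))/x^2) s := hϕd.sin.div hx1 hxne
  have hc3 : HasDerivAt (fun t => 2 * Real.sin (ϕ t)) (2*(cφ*dφ)) s :=
    hϕd.sin.const_mul 2
  have hF : HasDerivAt (fun t => (Real.cos (ϕ t) / (υ t).1,
      (Real.sin (ϕ t) / (υ t).1, 2 * Real.sin (ϕ t))))
      ((((-sφ*dφ)*x - cφ*(cφ/x))/x^2, (((cφ*dφ)*x - sφ*(cφ/x))/x^2, 2*(cφ*dφ)))) s :=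
    hc1.prodMk (hc2.prodMk hc3)
  have hEq : deriv υ =ᶠ[nhds s] (fun t => (Real.cos (ϕ t) / (υ t).1,
      (Real.sin (ϕ t) / (υ t).1, 2 * Real.sin (ϕ t)))) := by
    filter_upwards [hIopen.mem_nhds hs] with t ht
    exact Prod.ext_iff.mpr ⟨h1 t ht, Prod.ext_iff.mpr ⟨h2 t ht, h3 t ht⟩⟩
  have hdd : deriv (deriv υ) s
      = ((((-sφ*dφ)*x - cφ*(cφ/x))/x^2, (((cφ*dφ)*x - sφ*(cφ/x))/x^2, 2*(cφ*dφ)))) := by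
    rw [hEq.deriv_eq]; exact hF.deriv
  -- the covariant derivative
  have hcov : covQ Γ υ s = (dφ + sφ/x^2) • phiQ (υ s) (deriv υ s) := by
    rw [covQ, hdd, gamma_eq ε hε Γ hΓsymm hΓmetric (υ s) hx, hphi, hdu, GammaC, ← hxdef]
    show ((_ : ℝ), ((_ : ℝ), (_ : ℝ))) + ((_ : ℝ), ((_ : ℝ), (_ : ℝ)))
        = (dφ + sφ/x^2) • ((-sφ/x : ℝ), ((cφ/x : ℝ), (2*cφ : ℝ)))
    rw [Prod.mk_add_mk, Prod.mk_add_mk, Prod.smul_mk, Prod.smul_mk, smul_eq_mul,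
      smul_eq_mul, smul_eq_mul]
    refine Prod.ext_iff.mpr ⟨?_, Prod.ext_iff.mpr ⟨?_, ?_⟩⟩ <;>
      (show _ = _ ; field_simp; ring)
  refine ⟨hcov, hphi, ?_, ?_⟩
  · -- g(φυ', φυ') = 1
    rw [hphi]
    simp only [gQ, etaQ]
    have hpy : sφ^2 + cφ^2 = 1 := Real.sin_sq_add_cos_sq (ϕ s)
    field_simp
    nlinarith [hpy]
  · -- curvature
    set k : ℝ := dφ + sφ/x^2 with hk
    have hg1 : gQ ε (υ s) (phiQ (υ s) (deriv υ s)) (phiQ (υ s) (deriv υ s)) = 1 := by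
      rw [hphi]
      simp only [gQ, etaQ]
      have hpy : sφ^2 + cφ^2 = 1 := Real.sin_sq_add_cos_sq (ϕ s)
      field_simp
      nlinarith [hpy]
    have hgk : gQ ε (υ s) (covQ Γ υ s) (covQ Γ υ s) = k^2 := by
      rw [hcov]
      have : ∀ (a : R3), gQ ε (υ s) (k • a) (k • a) = k^2 * gQ ε (υ s) a a := by
        intro a
        simp only [gQ, etaQ, Prod.smul_fst, Prod.smul_snd, smul_eq_mul]
        ring
      rw [this, hg1, mul_one]
    rw [hgk, abs_of_nonneg (sq_nonneg k), Real.sqrt_sq_eq_abs]
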